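/- arXiv:1809.10088 — 6 statements merged into one kernel-verified Lean document; each statement's English description precedes it below -/
import Mathlib

section
/- If G is a simple graph with at least 2 vertices and |E(G)| ≥ (2/3)·C(|V(G)|,2), then G has a connected component G' with |V(G')| > (2/3)|V(G)| and moreover α(G') + 1 ≤ 2|V(G')| − |V(G)|, where α(G') denotes the independence number of G'. -/
/-!
Let `c` be a largest component, with `m` vertices out of `n`, and let `s` be an independent set
in `c`. Every vertex misses at least the `n - m` vertices outside its own component, and every
vertex of `s` also misses the rest of `s`, so the complement of `G` has at least
`(n (n - m) + |s| (|s| - 1)) / 2` edges. The edge bound leaves at most `n (n - 1) / 6` of them,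
so `3 (n (n - m) + |s| (|s| - 1)) ≤ n (n - 1)`. Taking `s = ∅` gives `3m > 2n`, and for
`|s| ≥ 2m - n` the inequality fails unless `n = 1`.
-/

open Finset

namespace SimpleGraph

variable {V : Type*} [Fintype V] [DecidableEq V]

lemma card_edgeFinset_add_card_edgeFinset_compl (G : SimpleGraph V) [DecidableRel G.Adj] :
    #G.edgeFinset + #Gᶜ.edgeFinset = (Fintype.card V).choose 2 := by
  rw [← card_union_of_disjoint (disjoint_edgeFinset.2 disjoint_compl_right), ← edgeFinset_sup,
    ← card_edgeFinset_top_eq_card_choose_two]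
  congr! 2
  exact sup_compl_eq_top

variable {G : SimpleGraph V} [DecidableRel G.Adj]

lemma card_sub_ncard_supp_add_le_degree_compl {s : Finset V} (hs : G.IsIndepSet s)
    {v : V} (hv : v ∈ s) (hsv : ↑s ⊆ (G.connectedComponentMk v).supp) :
    Fintype.card V - (G.connectedComponentMk v).supp.ncard + (#s - 1) ≤ Gᶜ.degree v := by
  set c := G.connectedComponentMk v
  have hdisj : Disjoint c.suppᶜ.toFinset (s.erase v) := by
    rw [Finset.disjoint_left]
    intro u hu hus
    exact Set.mem_toFinset.1 hu (hsv (mem_of_mem_erase hus))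
  have hsub : c.suppᶜ.toFinset ∪ s.erase v ⊆ Gᶜ.neighborFinset v := by
    intro u hu
    rw [mem_neighborFinset, compl_adj]
    rcases mem_union.1 hu with hu | hu
    · have hu : ¬G.Reachable u v := by simpa [c] using hu
      exact ⟨fun h => hu (h ▸ .rfl), fun h => hu h.reachable.symm⟩
    · exact ⟨(ne_of_mem_erase hu).symm, hs hv (mem_of_mem_erase hu) (ne_of_mem_erase hu).symm⟩
  calc Fintype.card V - c.supp.ncard + (#s - 1) = #(c.suppᶜ.toFinset ∪ s.erase v) := by
        rw [card_union_of_disjoint hdisj, Set.toFinset_compl, card_compl, card_erase_of_mem hv,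
          Set.ncard_eq_toFinset_card']
    _ ≤ Gᶜ.degree v := card_le_card hsub

lemma card_sub_ncard_supp_le_degree_compl (v : V) :
    Fintype.card V - (G.connectedComponentMk v).supp.ncard ≤ Gᶜ.degree v := by
  simpa using card_sub_ncard_supp_add_le_degree_compl (s := {v}) (by simp) (mem_singleton_self v)
    (by simp)

lemma card_mul_sub_add_le_two_mul_card_edgeFinset_compl {M : ℕ}
    (hM : ∀ c : G.ConnectedComponent, c.supp.ncard ≤ M) {s : Finset V} (hs : G.IsIndepSet s)
    {c : G.ConnectedComponent} (hsc : ↑s ⊆ c.supp) :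
    Fintype.card V * (Fintype.card V - M) + #s * (#s - 1) ≤ 2 * #Gᶜ.edgeFinset := by
  rw [← sum_degrees_eq_twice_card_edges]
  calc Fintype.card V * (Fintype.card V - M) + #s * (#s - 1)
      = ∑ v, (Fintype.card V - M + if v ∈ s then #s - 1 else 0) := by
        simp [sum_add_distrib, sum_ite_mem]
    _ ≤ ∑ v, Gᶜ.degree v := by
      refine sum_le_sum fun v _ => ?_
      have hvM := hM (G.connectedComponentMk v)
      by_cases hv : v ∈ s
      · obtain rfl : G.connectedComponentMk v = c := hsc hv
        have := card_sub_ncard_supp_add_le_degree_compl hs hv hsc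
        simp only [hv, if_true]
        omega
      · have := card_sub_ncard_supp_le_degree_compl (G := G) v
        simp only [hv, if_false]
        omega

end SimpleGraph

lemma two_mul_lt_three_mul_of_three_mul_le {n m : ℕ} (hn : 0 < n)
    (h : 3 * (n * (n - m)) ≤ n * (n - 1)) : 2 * n < 3 * m := by
  have : 3 * (n - m) ≤ n - 1 := Nat.le_of_mul_le_mul_left (by linarith) hn
  omega

lemma add_one_add_le_two_mul_of_three_mul_le {n m k : ℕ} (hn : 2 ≤ n) (hm : m ≤ n)
    (h : 3 * (n * (n - m) + k * (k - 1)) ≤ n * (n - 1)) : k + 1 + n ≤ 2 * m := by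
  have hnm : 2 * n < 3 * m := two_mul_lt_three_mul_of_three_mul_le (by omega) (by nlinarith)
  by_contra! hk
  have hk1 : 1 ≤ k := by omega
  zify [hm, hk1, (by omega : 1 ≤ n)] at h hnm hk
  have hn' : (2 : ℤ) ≤ n := by exact_mod_cast hn
  nlinarith [mul_nonneg (by linarith : (0 : ℤ) ≤ k - (2 * m - n))
      (by linarith : (0 : ℤ) ≤ k + (2 * m - n) - 1),
    mul_nonneg (by linarith : (0 : ℤ) ≤ n - m) (by linarith : (0 : ℤ) ≤ 3 * m - 2 * n - 1)]

open SimpleGraph in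
theorem big_component_small_independence_general {V : Type*} [Fintype V]
    (G : SimpleGraph V) [DecidableRel G.Adj]
    (hV : 2 ≤ Fintype.card V)
    (hE : 3 * G.edgeFinset.card ≥ 2 * (Fintype.card V).choose 2) :
    ∃ c : G.ConnectedComponent,
      3 * c.supp.ncard > 2 * Fintype.card V ∧
      ∀ s : Finset V, ↑s ⊆ c.supp → (∀ x ∈ s, ∀ y ∈ s, ¬ G.Adj x y) →
        s.card + 1 + Fintype.card V ≤ 2 * c.supp.ncard := by
  classical
  have : Nonempty V := Fintype.card_pos_iff.1 (by omega)
  obtain ⟨c, hc⟩ := Finite.exists_max fun d : G.ConnectedComponent => d.supp.ncard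
  have hcV : c.supp.ncard ≤ Fintype.card V := by simpa using c.supp.ncard_le_card
  have hchoose : 2 * (Fintype.card V).choose 2 = Fintype.card V * (Fintype.card V - 1) := by
    rw [Nat.choose_two_right, Nat.two_mul_div_two_of_even (Nat.even_mul_pred_self _)]
  have hcompl : ∀ s : Finset V, ↑s ⊆ c.supp → G.IsIndepSet s →
      3 * (Fintype.card V * (Fintype.card V - c.supp.ncard) + #s * (#s - 1))
        ≤ Fintype.card V * (Fintype.card V - 1) := by
    intro s hsc hs
    have := card_mul_sub_add_le_two_mul_card_edgeFinset_compl hc hs hsc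
    have := G.card_edgeFinset_add_card_edgeFinset_compl
    omega
  refine ⟨c, two_mul_lt_three_mul_of_three_mul_le (by omega) ?_, fun s hsc hs => ?_⟩
  · simpa using hcompl ∅ (by simp) (by simp)
  · exact add_one_add_le_two_mul_of_three_mul_le hV hcV
      (hcompl s hsc fun x hx y hy _ => hs x hx y hy)

theorem big_component_small_independence {V : Type*} [Fintype V] [DecidableEq V]
    (G : SimpleGraph V) [DecidableRel G.Adj]
    (hV : 2 ≤ Fintype.card V)
    (hE : 3 * G.edgeFinset.card ≥ 2 * (Fintype.card V).choose 2) :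
    ∃ c : G.ConnectedComponent,
      3 * c.supp.ncard > 2 * Fintype.card V ∧
      ∀ s : Finset V, ↑s ⊆ c.supp → (∀ x ∈ s, ∀ y ∈ s, ¬ G.Adj x y) →
        s.card + 1 + Fintype.card V ≤ 2 * c.supp.ncard :=
  big_component_small_independence_general G hV hE
end

section
/- Let a, b, c be nonnegative integers with b > 0, a + b ≥ 2c, and a ≥ c ≥ b. Then C(b,2) + C(c,2) + a·b < (2/3)·C(a+b+c, 2). -/
theorem counting_core (a b c : ℕ) (hb : 0 < b) (habc : 2 * c ≤ a + b)
    (hca : c ≤ a) (hbc : b ≤ c) :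
    3 * (Nat.choose b 2 + Nat.choose c 2 + a * b) < 2 * Nat.choose (a + b + c) 2 := by
  have h1 : Nat.choose b 2 = b * (b-1) / 2 := Nat.choose_two_right b
  have h2 : Nat.choose c 2 = c * (c-1) / 2 := Nat.choose_two_right c
  have h3 : Nat.choose (a+b+c) 2 = (a+b+c) * (a+b+c-1) / 2 := Nat.choose_two_right _
  obtain ⟨b, rfl⟩ : ∃ b', b = b' + 1 := ⟨b - 1, by omega⟩
  obtain ⟨c, rfl⟩ : ∃ c', c = c' + 1 := ⟨c - 1, by omega⟩
  have key : 3 * ((b+1)*b + (c+1)*c + 2*(a*(b+1))) < 2 * ((a+b+c+2)*(a+b+c+1)) := by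
    nlinarith [sq_nonneg (a - c), sq_nonneg (c - b), Nat.sub_add_cancel hca, Nat.sub_add_cancel hbc]
  simp only [Nat.add_sub_cancel] at h1 h2
  have e1 : a + (b+1) + (c+1) = a + b + c + 2 := by ring
  have e2 : a + b + c + 2 - 1 = a + b + c + 1 := by omega
  rw [e1, e2] at h3
  rw [e1]
  have hev : 2 ∣ (a+b+c+2)*(a+b+c+1) := by
    rw [mul_comm]; exact (Nat.even_mul_succ_self (a+b+c+1)).two_dvd
  have hev2 : (a+b+c+2)*(a+b+c+1) / 2 * 2 = (a+b+c+2)*(a+b+c+1) := Nat.div_mul_cancel hev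
  omega
end

section
/- For positive integers k ≥ 1 and m ≥ 1, the k-edge-colored graph H_m^k (vertex set X0 ⊔ X1 ⊔ ... ⊔ X_k with |X0| = (k−1)m and |X_i| = m for 1 ≤ i ≤ k; edges: all pairs between X0 and ∪_{i=1}^k X_i, and a clique on each X_i for 1 ≤ i ≤ k; color class E_i consists of all edges incident with a vertex of X_i) contains no non-monochromatic triangle, and each color class satisfies |E_i| = C(m,2) + (k−1)m^2. -/
/-!
`X0` is independent, so a triangle has at least two vertices in `X1 ∪ ... ∪ Xk`; being adjacent,
they lie in one part `Xi`, and every edge of the triangle meets one of them, hence lies in `E_i`.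
The class `E_i` is the disjoint union of the `C(m,2)` edges of the clique on `Xi` and the
`(k-1)m · m` edges between `X0` and `Xi`.
-/

/-- The graph `H_m^k`: vertex set `X0 ⊔ X1 ⊔ ... ⊔ Xk` with `|X0| = (k-1)m` and
`|Xi| = m` for `1 ≤ i ≤ k`; all edges between `X0` and the other parts, and a
clique on each `Xi`, `1 ≤ i ≤ k`. -/
def HkGraph (k m : ℕ) : SimpleGraph (Fin ((k - 1) * m) ⊕ (Fin k × Fin m)) :=
  SimpleGraph.fromRel (fun x y =>
    match x, y with
    | Sum.inl _, Sum.inr _ => True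
    | Sum.inr p, Sum.inr q => p.1 = q.1
    | _, _ => False)

/-- membership in part `X_i`, `1 ≤ i ≤ k` -/
def inPart {k m : ℕ} (i : Fin k) (v : Fin ((k - 1) * m) ⊕ (Fin k × Fin m)) : Prop :=
  ∃ a : Fin m, v = Sum.inr (i, a)

open Finset Sum

theorem edges_meet_of_two_vertices {α : Type*} {P : α → Prop} {x y z : α}
    (h : (P x ∧ P y) ∨ (P y ∧ P z) ∨ (P x ∧ P z)) :
    (∃ v ∈ s(x, y), P v) ∧ (∃ v ∈ s(y, z), P v) ∧ (∃ v ∈ s(x, z), P v) := by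
  rcases h with ⟨hx, hy⟩ | ⟨hy, hz⟩ | ⟨hx, hz⟩
  · exact ⟨⟨x, Sym2.mem_mk_left x y, hx⟩, ⟨y, Sym2.mem_mk_left y z, hy⟩,
      ⟨x, Sym2.mem_mk_left x z, hx⟩⟩
  · exact ⟨⟨y, Sym2.mem_mk_right x y, hy⟩, ⟨y, Sym2.mem_mk_left y z, hy⟩,
      ⟨z, Sym2.mem_mk_right x z, hz⟩⟩
  · exact ⟨⟨x, Sym2.mem_mk_left x y, hx⟩, ⟨z, Sym2.mem_mk_right y z, hz⟩,
      ⟨x, Sym2.mem_mk_left x z, hx⟩⟩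

theorem inPart_inr {k m : ℕ} (p : Fin k × Fin m) :
    inPart p.1 (inr p : Fin ((k - 1) * m) ⊕ (Fin k × Fin m)) :=
  ⟨p.2, rfl⟩

namespace HkGraph

variable {k m : ℕ}

theorem adj_inr_inr_iff {p q : Fin k × Fin m} :
    (HkGraph k m).Adj (inr p) (inr q) ↔ p ≠ q ∧ p.1 = q.1 := by
  simp [HkGraph, eq_comm]

theorem adj_inl_inr {a : Fin ((k - 1) * m)} {p : Fin k × Fin m} :
    (HkGraph k m).Adj (inl a) (inr p) := by
  simp [HkGraph]

theorem not_adj_inl_inl {a b : Fin ((k - 1) * m)} :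
    ¬ (HkGraph k m).Adj (inl a) (inl b) := by
  simp [HkGraph]

theorem inPart_of_adj_inr {p q : Fin k × Fin m} (h : (HkGraph k m).Adj (inr p) (inr q)) :
    inPart p.1 (inr q : Fin ((k - 1) * m) ⊕ (Fin k × Fin m)) := by
  rw [(adj_inr_inr_iff.mp h).2]
  exact inPart_inr q

theorem exists_two_inPart_of_triangle {x y z : Fin ((k - 1) * m) ⊕ (Fin k × Fin m)}
    (hxy : (HkGraph k m).Adj x y) (hyz : (HkGraph k m).Adj y z) (hxz : (HkGraph k m).Adj x z) :
    ∃ i, (inPart i x ∧ inPart i y) ∨ (inPart i y ∧ inPart i z) ∨ (inPart i x ∧ inPart i z) := by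
  rcases x with a | p <;> rcases y with b | q
  · exact absurd hxy not_adj_inl_inl
  · rcases z with c | r
    · exact absurd hxz not_adj_inl_inl
    · exact ⟨q.1, .inr (.inl ⟨inPart_inr q, inPart_of_adj_inr hyz⟩)⟩
  · rcases z with c | r
    · exact absurd hyz not_adj_inl_inl
    · exact ⟨p.1, .inr (.inr ⟨inPart_inr p, inPart_of_adj_inr hxz⟩)⟩
  · exact ⟨p.1, .inl ⟨inPart_inr p, inPart_of_adj_inr hxy⟩⟩

variable (k m) in
def cliqueEdges (i : Fin k) : Finset (Sym2 (Fin ((k - 1) * m) ⊕ (Fin k × Fin m))) :=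
  (univ.filter fun e : Sym2 (Fin m) => ¬ e.IsDiag).image (Sym2.map fun b => inr (i, b))

variable (k m) in
def crossEdges (i : Fin k) : Finset (Sym2 (Fin ((k - 1) * m) ⊕ (Fin k × Fin m))) :=
  univ.image fun p : Fin ((k - 1) * m) × Fin m => s(inl p.1, inr (i, p.2))

theorem card_cliqueEdges (i : Fin k) : (cliqueEdges k m i).card = m.choose 2 := by
  rw [cliqueEdges, card_image_of_injective _ (Sym2.map.injective fun _ _ h => by simpa using h),
    ← Fintype.card_subtype, Sym2.card_subtype_not_diag, Fintype.card_fin]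

theorem card_crossEdges (i : Fin k) : (crossEdges k m i).card = (k - 1) * m * m := by
  rw [crossEdges, card_image_of_injective, card_univ, Fintype.card_prod, Fintype.card_fin,
    Fintype.card_fin]
  rintro ⟨a, b⟩ ⟨a', b'⟩ h
  simpa [Sym2.eq_iff] using h

theorem disjoint_cliqueEdges_crossEdges (i : Fin k) :
    Disjoint (cliqueEdges k m i) (crossEdges k m i) := by
  simp only [cliqueEdges, crossEdges, disjoint_left, mem_image, not_exists, not_and]
  rintro _ ⟨e, -, rfl⟩ ⟨a, b⟩ -
  induction e using Sym2.ind
  simp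

theorem mem_cliqueEdges_union_crossEdges {i : Fin k} {x : Fin ((k - 1) * m) ⊕ (Fin k × Fin m)}
    {b : Fin m} (h : (HkGraph k m).Adj x (inr (i, b))) :
    s(x, inr (i, b)) ∈ cliqueEdges k m i ∪ crossEdges k m i := by
  rcases x with a | ⟨j, c⟩
  · exact mem_union_right _ (mem_image.mpr ⟨(a, b), mem_univ _, rfl⟩)
  · obtain ⟨hne, rfl : j = i⟩ := adj_inr_inr_iff.mp h
    refine mem_union_left _ (mem_image.mpr ⟨s(c, b), ?_, rfl⟩)
    simpa using fun hcb => hne (by rw [hcb])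

theorem adj_and_inPart_of_mem_cliqueEdges_union_crossEdges {i : Fin k}
    {e : Sym2 (Fin ((k - 1) * m) ⊕ (Fin k × Fin m))}
    (he : e ∈ cliqueEdges k m i ∪ crossEdges k m i) :
    e ∈ (HkGraph k m).edgeSet ∧ ∃ v ∈ e, inPart i v := by
  simp only [cliqueEdges, crossEdges, mem_union, mem_image, mem_filter, mem_univ, true_and]
    at he
  rcases he with ⟨e', hdiag, rfl⟩ | ⟨⟨a, b⟩, rfl⟩
  · induction e' using Sym2.ind with
    | _ b c =>
      rw [Sym2.mk_isDiag_iff] at hdiag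
      refine ⟨adj_inr_inr_iff.mpr ⟨by simpa using hdiag, rfl⟩, inr (i, b), ?_, inPart_inr (i, b)⟩
      simp
  · exact ⟨adj_inl_inr, inr (i, b), Sym2.mem_mk_right _ _, inPart_inr (i, b)⟩

open scoped Classical in
theorem colourClass_eq (i : Fin k) :
    univ.filter (fun e : Sym2 (Fin ((k - 1) * m) ⊕ (Fin k × Fin m)) =>
        e ∈ (HkGraph k m).edgeSet ∧ ∃ v ∈ e, inPart i v)
      = cliqueEdges k m i ∪ crossEdges k m i := by
  ext e
  refine ⟨fun he => ?_, fun he => mem_filter.mpr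
    ⟨mem_univ e, adj_and_inPart_of_mem_cliqueEdges_union_crossEdges he⟩⟩
  obtain ⟨hadj, v, hv, b, rfl⟩ := (mem_filter.mp he).2
  induction e using Sym2.ind with
  | _ x y =>
    rcases Sym2.mem_iff.mp hv with rfl | rfl
    · rw [Sym2.eq_swap]
      exact mem_cliqueEdges_union_crossEdges (SimpleGraph.adj_symm _ hadj)
    · exact mem_cliqueEdges_union_crossEdges hadj

end HkGraph

open scoped Classical in
theorem Hkm_properties_general (k m : ℕ) :
    (∀ x y z : Fin ((k - 1) * m) ⊕ (Fin k × Fin m),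
      (HkGraph k m).Adj x y → (HkGraph k m).Adj y z → (HkGraph k m).Adj x z →
      ∃ i : Fin k, (∃ v ∈ s(x, y), inPart i v) ∧ (∃ v ∈ s(y, z), inPart i v) ∧
        (∃ v ∈ s(x, z), inPart i v)) ∧
    (∀ i : Fin k,
      (Finset.univ.filter (fun e : Sym2 (Fin ((k - 1) * m) ⊕ (Fin k × Fin m)) =>
          e ∈ (HkGraph k m).edgeSet ∧ ∃ v ∈ e, inPart i v)).card
        = Nat.choose m 2 + (k - 1) * m ^ 2) := by
  refine ⟨fun x y z hxy hyz hxz => ?_, fun i => ?_⟩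
  · obtain ⟨i, hi⟩ := HkGraph.exists_two_inPart_of_triangle hxy hyz hxz
    exact ⟨i, edges_meet_of_two_vertices hi⟩
  · rw [HkGraph.colourClass_eq, card_union_of_disjoint (HkGraph.disjoint_cliqueEdges_crossEdges i),
      HkGraph.card_cliqueEdges, HkGraph.card_crossEdges, sq, mul_assoc]

open scoped Classical in
/-- `H_m^k` has no non-monochromatic triangle (every triangle has all of its edges in one
colour class `E_i`, the edges incident with `X_i`), and `|E_i| = C(m,2) + (k-1)m²`. -/
theorem Hkm_properties (k m : ℕ) (hk : 1 ≤ k) (hm : 1 ≤ m) :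
    (∀ x y z : Fin ((k - 1) * m) ⊕ (Fin k × Fin m),
      (HkGraph k m).Adj x y → (HkGraph k m).Adj y z → (HkGraph k m).Adj x z →
      ∃ i : Fin k, (∃ v ∈ s(x, y), inPart i v) ∧ (∃ v ∈ s(y, z), inPart i v) ∧
        (∃ v ∈ s(x, z), inPart i v)) ∧
    (∀ i : Fin k,
      (Finset.univ.filter (fun e : Sym2 (Fin ((k - 1) * m) ⊕ (Fin k × Fin m)) =>
          e ∈ (HkGraph k m).edgeSet ∧ ∃ v ∈ e, inPart i v)).card
        = Nat.choose m 2 + (k - 1) * m ^ 2) :=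
  Hkm_properties_general k m
end

section
/- Let G be a 2-edge-colored simple graph with colors R, B containing no non-monochromatic triangle and no induced properly-colored 4-cycle. If S1 and S2 are disjoint seagulls (vertex sets of 2-edge paths with edges of different colors), then the number of edges between S1 and S2 is at most 6. -/
open scoped Classical in
theorem seagulls_at_most_six_edges {V : Type*} [DecidableEq V]
    (G : SimpleGraph V) (R B : Set (Sym2 V))
    (hU : R ∪ B = G.edgeSet) (hd : Disjoint R B)
    -- no non-monochromatic triangle
    (hNoNM : ∀ a b c : V, G.Adj a b → G.Adj b c → G.Adj a c →
      (s(a, b) ∈ R ∧ s(b, c) ∈ R ∧ s(a, c) ∈ R) ∨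
      (s(a, b) ∈ B ∧ s(b, c) ∈ B ∧ s(a, c) ∈ B))
    -- no properly-coloured 4-cycle
    (hNoAlt : ¬ ∃ a b c d : V, a ≠ b ∧ a ≠ c ∧ a ≠ d ∧ b ≠ c ∧ b ≠ d ∧ c ≠ d ∧
      s(a, b) ∈ R ∧ s(b, c) ∈ B ∧ s(c, d) ∈ R ∧ s(d, a) ∈ B)
    -- two disjoint seagulls
    (x1 y1 z1 x2 y2 z2 : V)
    (hdisj : ({x1, y1, z1} : Finset V) ∩ ({x2, y2, z2} : Finset V) = ∅)
    (hcard1 : ({x1, y1, z1} : Finset V).card = 3)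
    (hcard2 : ({x2, y2, z2} : Finset V).card = 3)
    (h1R : s(x1, y1) ∈ R) (h1B : s(y1, z1) ∈ B)
    (h2R : s(x2, y2) ∈ R) (h2B : s(y2, z2) ∈ B) :
    ((({x1, y1, z1} : Finset V) ×ˢ ({x2, y2, z2} : Finset V)).filter
        (fun p : V × V => G.Adj p.1 p.2)).card ≤ 6 := by
  classical
  have hRadj : ∀ {a b : V}, s(a, b) ∈ R → G.Adj a b := by
    intro a b h
    exact (G.mem_edgeSet).1 (hU ▸ (Set.mem_union_left _ h))
  have hBadj : ∀ {a b : V}, s(a, b) ∈ B → G.Adj a b := by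
    intro a b h
    exact (G.mem_edgeSet).1 (hU ▸ (Set.mem_union_right _ h))
  -- key: no vertex is adjacent to all of x1, y1, z1
  have key : ∀ j : V, ¬ (G.Adj x1 j ∧ G.Adj y1 j ∧ G.Adj z1 j) := by
    rintro j ⟨hxj, hyj, hzj⟩
    have h1 := hNoNM x1 y1 j (hRadj h1R) hyj hxj
    have h2 := hNoNM y1 z1 j (hBadj h1B) hzj hyj
    have hyR : s(y1, j) ∈ R := by
      rcases h1 with ⟨_, h, _⟩ | ⟨h, _, _⟩
      · exact h
      · exact absurd h1R (Set.disjoint_right.mp hd h)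
    have hyB : s(y1, j) ∈ B := by
      rcases h2 with ⟨h, _, _⟩ | ⟨_, _, h⟩
      · exact absurd h (Set.disjoint_right.mp hd h1B)
      · exact h
    exact Set.disjoint_left.mp hd hyR hyB
  set S1 : Finset V := {x1, y1, z1} with hS1
  set S2 : Finset V := {x2, y2, z2} with hS2
  set T : Finset (V × V) := (S1 ×ˢ S2).filter (fun p : V × V => G.Adj p.1 p.2) with hT
  have hcardeq : T.card = ∑ j ∈ S2, (T.filter (fun p => p.2 = j)).card := by
    apply Finset.card_eq_sum_card_fiberwise
    intro p hp
    exact (Finset.mem_product.1 (Finset.mem_filter.1 hp).1).2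
  have fiber : ∀ j ∈ S2, (T.filter (fun p => p.2 = j)).card ≤ 2 := by
    intro j _
    have hsub : (T.filter (fun p => p.2 = j)).card ≤
        (S1.filter (fun i => G.Adj i j)).card := by
      apply Finset.card_le_card_of_injOn (fun p => p.1)
      · intro p hp
        obtain ⟨hpT, hpj⟩ := Finset.mem_filter.1 hp
        obtain ⟨hpm, hadj⟩ := Finset.mem_filter.1 hpT
        refine Finset.mem_filter.2 ⟨(Finset.mem_product.1 hpm).1, ?_⟩
        rwa [hpj] at hadj
      · intro p hp q hq h
        obtain ⟨_, hpj⟩ := Finset.mem_filter.1 hp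
        obtain ⟨_, hqj⟩ := Finset.mem_filter.1 hq
        exact Prod.ext h (hpj.trans hqj.symm)
    refine hsub.trans ?_
    by_contra hgt
    push_neg at hgt
    have h3 : S1.card ≤ (S1.filter (fun i => G.Adj i j)).card := by
      rw [hcard1]; omega
    have heq : S1.filter (fun i => G.Adj i j) = S1 :=
      Finset.eq_of_subset_of_card_le (Finset.filter_subset _ _) h3
    have hx : x1 ∈ S1 := by simp [hS1]
    have hy : y1 ∈ S1 := by simp [hS1]
    have hz : z1 ∈ S1 := by simp [hS1]
    rw [← heq] at hx hy hz
    exact key j ⟨(Finset.mem_filter.1 hx).2, (Finset.mem_filter.1 hy).2,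
      (Finset.mem_filter.1 hz).2⟩
  calc T.card = ∑ j ∈ S2, (T.filter (fun p => p.2 = j)).card := hcardeq
    _ ≤ ∑ _j ∈ S2, 2 := Finset.sum_le_sum fiber
    _ = 6 := by rw [Finset.sum_const, hcard2]; rfl
end

section
/- Let G be a 2-edge-colored simple graph with colors R, B containing no non-monochromatic triangle and no properly-colored 4-cycle. If S1 and S2 are disjoint seagulls, r = e_R(S1,S2), b = e_B(S1,S2), then r + b + max{r, b} ≤ 9. -/
/-!
Record the colours of the nine pairs between the two seagulls in a 3 × 3 matrix with entries
red, blue or absent. Since no triangle is bichromatic, a vertex adjacent to both ends of a red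
(blue) edge sees both ends in red (blue); so each row and each column is constrained by the seagull
on the other side, and in particular has at most two entries. Forbidding the alternating 4-cycles
through the two red edges and through the two blue edges of the seagulls excludes four more
patterns, and an exhaustive check of the 3⁹ matrices gives the bound.
-/

section Colouring

variable {V : Type*} {R B : Set (Sym2 V)} {u v : V}

/-- `some true` is red, `some false` is blue and `none` is a non-edge. -/
noncomputable def edgeColour (R B : Set (Sym2 V)) (u v : V) : Option Bool :=
  open scoped Classical in
  if s(u, v) ∈ R then some true else if s(u, v) ∈ B then some false else none

theorem edgeColour_eq_red_iff : edgeColour R B u v = some true ↔ s(u, v) ∈ R := by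
  unfold edgeColour
  split_ifs <;> simp_all

theorem edgeColour_eq_blue_iff (hd : Disjoint R B) :
    edgeColour R B u v = some false ↔ s(u, v) ∈ B := by
  unfold edgeColour
  split_ifs with hR
  · simpa using Set.disjoint_left.mp hd hR
  · simp_all
  · simp_all

theorem edgeColour_comm (R B : Set (Sym2 V)) (u v : V) :
    edgeColour R B u v = edgeColour R B v u := by
  rw [edgeColour, edgeColour, Sym2.eq_swap]

theorem SimpleGraph.adj_of_edgeColour_ne_none {G : SimpleGraph V} (hRB : R ∪ B ⊆ G.edgeSet)
    (h : edgeColour R B u v ≠ none) : G.Adj u v := by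
  unfold edgeColour at h
  split_ifs at h with hR hB
  · exact hRB (Or.inl hR)
  · exact hRB (Or.inr hB)
  · exact absurd rfl h

theorem SimpleGraph.adj_and_mem_iff_edgeColour_eq_red {G : SimpleGraph V}
    (hRB : R ∪ B ⊆ G.edgeSet) : G.Adj u v ∧ s(u, v) ∈ R ↔ edgeColour R B u v = some true := by
  rw [edgeColour_eq_red_iff]
  exact and_iff_right_of_imp fun h => hRB (Or.inl h)

theorem SimpleGraph.adj_and_mem_iff_edgeColour_eq_blue {G : SimpleGraph V}
    (hRB : R ∪ B ⊆ G.edgeSet) (hd : Disjoint R B) :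
    G.Adj u v ∧ s(u, v) ∈ B ↔ edgeColour R B u v = some false := by
  rw [edgeColour_eq_blue_iff hd]
  exact and_iff_right_of_imp fun h => hRB (Or.inr h)

def NoBichromaticTriangle (G : SimpleGraph V) (R B : Set (Sym2 V)) : Prop :=
  ∀ a b c : V, G.Adj a b → G.Adj b c → G.Adj a c →
    (s(a, b) ∈ R ∧ s(b, c) ∈ R ∧ s(a, c) ∈ R) ∨ (s(a, b) ∈ B ∧ s(b, c) ∈ B ∧ s(a, c) ∈ B)

def NoAlternatingFourCycle (R B : Set (Sym2 V)) : Prop :=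
  ¬ ∃ a b c d : V, a ≠ b ∧ a ≠ c ∧ a ≠ d ∧ b ≠ c ∧ b ≠ d ∧ c ≠ d ∧
    s(a, b) ∈ R ∧ s(b, c) ∈ B ∧ s(c, d) ∈ R ∧ s(d, a) ∈ B

end Colouring

/-- The colours `p`, `q`, `r` that a vertex can see towards a seagull `x y z` with `xy` red and
`yz` blue when no triangle is bichromatic. -/
def IsSeagullProfile (p q r : Option Bool) : Prop :=
  (p ≠ none → q ≠ none → p = some true ∧ q = some true) ∧
  (q ≠ none → r ≠ none → q = some false ∧ r = some false)

instance (p q r : Option Bool) : Decidable (IsSeagullProfile p q r) :=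
  inferInstanceAs (Decidable (_ ∧ _))

namespace NoBichromaticTriangle

variable {V : Type*} {G : SimpleGraph V} {R B : Set (Sym2 V)} {x y z : V}

theorem mem_red_of_adj (hT : NoBichromaticTriangle G R B) (hRB : R ∪ B ⊆ G.edgeSet)
    (hd : Disjoint R B) {w : V} (hxy : s(x, y) ∈ R) (hx : G.Adj x w) (hy : G.Adj y w) :
    s(x, w) ∈ R ∧ s(y, w) ∈ R := by
  rcases hT x y w (hRB (Or.inl hxy)) hy hx with ⟨-, hyw, hxw⟩ | ⟨hxy', -, -⟩
  · exact ⟨hxw, hyw⟩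
  · exact absurd hxy' (Set.disjoint_left.mp hd hxy)

theorem mem_blue_of_adj (hT : NoBichromaticTriangle G R B) (hRB : R ∪ B ⊆ G.edgeSet)
    (hd : Disjoint R B) {w : V} (hxy : s(x, y) ∈ B) (hx : G.Adj x w) (hy : G.Adj y w) :
    s(x, w) ∈ B ∧ s(y, w) ∈ B := by
  rcases hT x y w (hRB (Or.inr hxy)) hy hx with ⟨hxy', -, -⟩ | ⟨-, hyw, hxw⟩
  · exact absurd hxy (Set.disjoint_left.mp hd hxy')
  · exact ⟨hxw, hyw⟩

theorem isSeagullProfile (hT : NoBichromaticTriangle G R B) (hRB : R ∪ B ⊆ G.edgeSet)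
    (hd : Disjoint R B) (hxy : s(x, y) ∈ R) (hyz : s(y, z) ∈ B) (w : V) :
    IsSeagullProfile (edgeColour R B x w) (edgeColour R B y w) (edgeColour R B z w) := by
  simp only [IsSeagullProfile, edgeColour_eq_red_iff, edgeColour_eq_blue_iff hd]
  refine ⟨fun hx hy => ?_, fun hy hz => ?_⟩
  · exact hT.mem_red_of_adj hRB hd hxy (G.adj_of_edgeColour_ne_none hRB hx)
      (G.adj_of_edgeColour_ne_none hRB hy)
  · exact hT.mem_blue_of_adj hRB hd hyz (G.adj_of_edgeColour_ne_none hRB hy)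
      (G.adj_of_edgeColour_ne_none hRB hz)

theorem isSeagullProfile' (hT : NoBichromaticTriangle G R B) (hRB : R ∪ B ⊆ G.edgeSet)
    (hd : Disjoint R B) (hxy : s(x, y) ∈ R) (hyz : s(y, z) ∈ B) (w : V) :
    IsSeagullProfile (edgeColour R B w x) (edgeColour R B w y) (edgeColour R B w z) := by
  simpa only [edgeColour_comm R B w] using hT.isSeagullProfile hRB hd hxy hyz w

end NoBichromaticTriangle

namespace NoAlternatingFourCycle

variable {V : Type*} {R B : Set (Sym2 V)} {a b c d : V}

theorem not_blue_and_blue (hC : NoAlternatingFourCycle R B) (hd : Disjoint R B)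
    (hne : [a, b, c, d].Nodup) (hab : s(a, b) ∈ R) (hcd : s(c, d) ∈ R) :
    ¬ (edgeColour R B b c = some false ∧ edgeColour R B a d = some false) := by
  rintro ⟨hbc, had⟩
  simp only [List.nodup_cons, List.mem_cons, List.not_mem_nil, or_false, not_false_eq_true,
    not_or, List.nodup_nil, and_true] at hne
  obtain ⟨⟨hab', hac, had'⟩, ⟨hbc', hbd⟩, hcd'⟩ := hne
  rw [edgeColour_eq_blue_iff hd] at hbc had
  exact hC ⟨a, b, c, d, hab', hac, had', hbc', hbd, hcd', hab, hbc, hcd, Sym2.eq_swap ▸ had⟩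

theorem not_red_and_red (hC : NoAlternatingFourCycle R B) (hne : [a, b, c, d].Nodup)
    (hbc : s(b, c) ∈ B) (hda : s(d, a) ∈ B) :
    ¬ (edgeColour R B a b = some true ∧ edgeColour R B d c = some true) := by
  rintro ⟨hab, hdc⟩
  simp only [List.nodup_cons, List.mem_cons, List.not_mem_nil, or_false, not_false_eq_true,
    not_or, List.nodup_nil, and_true] at hne
  obtain ⟨⟨hab', hac, had'⟩, ⟨hbc', hbd⟩, hcd'⟩ := hne
  rw [edgeColour_eq_red_iff] at hab hdc
  exact hC ⟨a, b, c, d, hab', hac, had', hbc', hbd, hcd', hab, hbc, Sym2.eq_swap ▸ hdc, hda⟩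

end NoAlternatingFourCycle

theorem Finset.ne_and_ne_and_ne_of_card_eq_three {α : Type*} [DecidableEq α] {a b c : α}
    (h : ({a, b, c} : Finset α).card = 3) : a ≠ b ∧ a ≠ c ∧ b ≠ c := by
  grind [Finset.card_eq_three]

theorem Finset.card_filter_triple_product_eq_count {V α : Type*} [DecidableEq V] [DecidableEq α]
    (f : V → V → α) (a : α) {x₁ y₁ z₁ x₂ y₂ z₂ : V}
    (h₁ : x₁ ≠ y₁ ∧ x₁ ≠ z₁ ∧ y₁ ≠ z₁) (h₂ : x₂ ≠ y₂ ∧ x₂ ≠ z₂ ∧ y₂ ≠ z₂) :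
    (({x₁, y₁, z₁} ×ˢ {x₂, y₂, z₂} : Finset (V × V)).filter (fun p => f p.1 p.2 = a)).card =
      Multiset.count a
        {f x₁ x₂, f x₁ y₂, f x₁ z₂, f y₁ x₂, f y₁ y₂, f y₁ z₂, f z₁ x₂, f z₁ y₂, f z₁ z₂} := by
  obtain ⟨hxy₁, hxz₁, hyz₁⟩ := h₁
  obtain ⟨hxy₂, hxz₂, hyz₂⟩ := h₂
  rw [Finset.card_filter, Finset.sum_product]
  simp only [Finset.sum_insert, Finset.mem_insert, Finset.mem_singleton, Finset.sum_singleton,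
    Multiset.insert_eq_cons, Multiset.count_cons, Multiset.count_singleton, eq_comm (a := a), *,
    or_self, not_false_eq_true]
  ring

set_option synthInstance.maxSize 300 in
/-- `cᵢⱼ` is the colour between the `i`-th vertex of one seagull and the `j`-th of the other;
`hred` and `hblue` forbid the alternating 4-cycles through their red and through their blue edges. -/
theorem seagull_matrix_bound (c₁₁ c₁₂ c₁₃ c₂₁ c₂₂ c₂₃ c₃₁ c₃₂ c₃₃ : Option Bool)
    (hrow₁ : IsSeagullProfile c₁₁ c₁₂ c₁₃) (hrow₂ : IsSeagullProfile c₂₁ c₂₂ c₂₃)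
    (hrow₃ : IsSeagullProfile c₃₁ c₃₂ c₃₃) (hcol₁ : IsSeagullProfile c₁₁ c₂₁ c₃₁)
    (hcol₂ : IsSeagullProfile c₁₂ c₂₂ c₃₂) (hcol₃ : IsSeagullProfile c₁₃ c₂₃ c₃₃)
    (hred₁ : ¬ (c₂₁ = some false ∧ c₁₂ = some false))
    (hred₂ : ¬ (c₂₂ = some false ∧ c₁₁ = some false))
    (hblue₁ : ¬ (c₃₂ = some true ∧ c₂₃ = some true))
    (hblue₂ : ¬ (c₃₃ = some true ∧ c₂₂ = some true)) :
    let l : Multiset (Option Bool) := {c₁₁, c₁₂, c₁₃, c₂₁, c₂₂, c₂₃, c₃₁, c₃₂, c₃₃}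
    l.count (some true) + l.count (some false) + max (l.count (some true)) (l.count (some false))
      ≤ 9 := by
  dsimp only
  revert c₁₁ c₁₂ c₁₃ c₂₁ c₂₂ c₂₃ c₃₁ c₃₂ c₃₃
  decide

open scoped Classical in
theorem seagulls_colour_count {V : Type*} [DecidableEq V]
    (G : SimpleGraph V) (R B : Set (Sym2 V))
    (hU : R ∪ B = G.edgeSet) (hd : Disjoint R B)
    -- no non-monochromatic triangle
    (hNoNM : ∀ a b c : V, G.Adj a b → G.Adj b c → G.Adj a c →
      (s(a, b) ∈ R ∧ s(b, c) ∈ R ∧ s(a, c) ∈ R) ∨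
      (s(a, b) ∈ B ∧ s(b, c) ∈ B ∧ s(a, c) ∈ B))
    -- no properly-coloured 4-cycle
    (hNoAlt : ¬ ∃ a b c d : V, a ≠ b ∧ a ≠ c ∧ a ≠ d ∧ b ≠ c ∧ b ≠ d ∧ c ≠ d ∧
      s(a, b) ∈ R ∧ s(b, c) ∈ B ∧ s(c, d) ∈ R ∧ s(d, a) ∈ B)
    -- two disjoint seagulls
    (x1 y1 z1 x2 y2 z2 : V)
    (hdisj : ({x1, y1, z1} : Finset V) ∩ ({x2, y2, z2} : Finset V) = ∅)
    (hcard1 : ({x1, y1, z1} : Finset V).card = 3)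
    (hcard2 : ({x2, y2, z2} : Finset V).card = 3)
    (h1R : s(x1, y1) ∈ R) (h1B : s(y1, z1) ∈ B)
    (h2R : s(x2, y2) ∈ R) (h2B : s(y2, z2) ∈ B)
    (r b : ℕ)
    (hr : r = ((({x1, y1, z1} : Finset V) ×ˢ ({x2, y2, z2} : Finset V)).filter
        (fun p : V × V => G.Adj p.1 p.2 ∧ s(p.1, p.2) ∈ R)).card)
    (hb : b = ((({x1, y1, z1} : Finset V) ×ˢ ({x2, y2, z2} : Finset V)).filter
        (fun p : V × V => G.Adj p.1 p.2 ∧ s(p.1, p.2) ∈ B)).card) :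
    r + b + max r b ≤ 9 := by
  have hT : NoBichromaticTriangle G R B := hNoNM
  have hC : NoAlternatingFourCycle R B := hNoAlt
  have hRB : R ∪ B ⊆ G.edgeSet := hU.le
  have h₁ := Finset.ne_and_ne_and_ne_of_card_eq_three hcard1
  have h₂ := Finset.ne_and_ne_and_ne_of_card_eq_three hcard2
  have hcross := Finset.disjoint_iff_ne.mp (Finset.disjoint_iff_inter_eq_empty.mpr hdisj)
  simp only [Finset.mem_insert, Finset.mem_singleton, forall_eq_or_imp, forall_eq] at hcross
  rw [Finset.filter_congr fun _ _ => G.adj_and_mem_iff_edgeColour_eq_red hRB,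
    Finset.card_filter_triple_product_eq_count _ _ h₁ h₂] at hr
  rw [Finset.filter_congr fun _ _ => G.adj_and_mem_iff_edgeColour_eq_blue hRB hd,
    Finset.card_filter_triple_product_eq_count _ _ h₁ h₂] at hb
  subst hr hb
  exact seagull_matrix_bound _ _ _ _ _ _ _ _ _
    (hT.isSeagullProfile' hRB hd h2R h2B x1) (hT.isSeagullProfile' hRB hd h2R h2B y1)
    (hT.isSeagullProfile' hRB hd h2R h2B z1) (hT.isSeagullProfile hRB hd h1R h1B x2)
    (hT.isSeagullProfile hRB hd h1R h1B y2) (hT.isSeagullProfile hRB hd h1R h1B z2)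
    (hC.not_blue_and_blue hd (by simp [*, Ne.symm]) h1R h2R)
    (hC.not_blue_and_blue hd (by simp [*, Ne.symm]) h1R (Sym2.eq_swap ▸ h2R))
    (hC.not_red_and_red (by simp [*, Ne.symm]) h2B h1B)
    (hC.not_red_and_red (by simp [*, Ne.symm]) (Sym2.eq_swap ▸ h2B) h1B)
end

section
/- Let G be a 2-edge-colored simple graph with colors R, B having no non-monochromatic triangle, let H be a monochromatic (all-red) connected component of the subgraph induced on the vertices not covered by a maximum collection of disjoint seagulls, with |V(H)| ≥ 2, and assume no properly-colored 4-cycle exists in G. Then for any seagull S_i (disjoint from V(H)), the number of blue edges between S_i and V(H) is at most α(H) + 1, where α(H) is the independence number of H. -/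
open scoped Classical in
/-- Blue edges from a seagull `{x,y,z}` (with `xy ∈ R`, `yz ∈ B`) to an all-red
connected piece `H` number at most `α(H) + 1`: i.e. there is an independent set
`A ⊆ H` with `e_B({x,y,z}, H) ≤ |A| + 1`. -/
theorem blue_edges_to_red_component {V : Type*} [DecidableEq V]
    (G : SimpleGraph V) (R B : Set (Sym2 V))
    (hU : R ∪ B = G.edgeSet) (hd : Disjoint R B)
    -- no non-monochromatic triangle
    (hNoNM : ∀ a b c : V, G.Adj a b → G.Adj b c → G.Adj a c →
      (s(a, b) ∈ R ∧ s(b, c) ∈ R ∧ s(a, c) ∈ R) ∨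
      (s(a, b) ∈ B ∧ s(b, c) ∈ B ∧ s(a, c) ∈ B))
    -- no properly-coloured 4-cycle
    (hNoAlt : ¬ ∃ a b c d : V, a ≠ b ∧ a ≠ c ∧ a ≠ d ∧ b ≠ c ∧ b ≠ d ∧ c ≠ d ∧
      s(a, b) ∈ R ∧ s(b, c) ∈ B ∧ s(c, d) ∈ R ∧ s(d, a) ∈ B)
    -- the seagull S_i = {x, y, z}
    (x y z : V) (hcard : ({x, y, z} : Finset V).card = 3)
    (hRxy : s(x, y) ∈ R) (hByz : s(y, z) ∈ B)
    -- H: an all-red connected piece, disjoint from the seagull, with at least 2 vertices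
    (H : Finset V)
    (hHdisj : Disjoint H ({x, y, z} : Finset V))
    (hHcard : 2 ≤ H.card)
    (hHred : ∀ u ∈ H, ∀ v ∈ H, G.Adj u v → s(u, v) ∈ R)
    (hHconn : (G.induce (↑H : Set V)).Connected)
    -- maximality of the seagull collection: no two disjoint seagulls
    -- {z, w, w'} and {x, y, u} with u, w, w' ∈ H
    (hMax : ¬ ∃ w w' u : V, w ∈ H ∧ w' ∈ H ∧ u ∈ H ∧
      u ≠ w ∧ u ≠ w' ∧ w ≠ w' ∧
      s(z, w) ∈ B ∧ s(w, w') ∈ R ∧ (s(x, u) ∈ B ∨ s(y, u) ∈ B)) :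
    ∃ A : Finset V, A ⊆ H ∧ (∀ a ∈ A, ∀ b ∈ A, ¬ G.Adj a b) ∧
      ((({x, y, z} : Finset V) ×ˢ H).filter
        (fun p : V × V => G.Adj p.1 p.2 ∧ s(p.1, p.2) ∈ B)).card ≤ A.card + 1 := by
  classical
  -- membership in R or B gives adjacency
  have hRadj : ∀ {a b : V}, s(a, b) ∈ R → G.Adj a b := by
    intro a b h
    have : s(a, b) ∈ R ∪ B := Or.inl h
    rw [hU] at this
    exact this
  have hBadj : ∀ {a b : V}, s(a, b) ∈ B → G.Adj a b := by
    intro a b h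
    have : s(a, b) ∈ R ∪ B := Or.inr h
    rw [hU] at this
    exact this
  -- no mixed triangle
  have noMixed : ∀ a b c : V, s(a, b) ∈ R → s(b, c) ∈ B → s(a, c) ∈ B → False := by
    intro a b c h1 h2 h3
    rcases hNoNM a b c (hRadj h1) (hBadj h2) (hBadj h3) with ⟨_, h, _⟩ | ⟨h, _, _⟩
    · exact Set.disjoint_left.mp hd h h2
    · exact Set.disjoint_left.mp hd h1 h
  -- x, y, z distinct
  have key : ∀ a b : V, ¬ (({x, y, z} : Finset V) ⊆ {a, b}) := by
    intro a b hsub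
    have h1 := Finset.card_le_card hsub
    have h2 : ({a, b} : Finset V).card ≤ 2 := (Finset.card_insert_le _ _).trans (by simp)
    omega
  have hxy : x ≠ y := by
    rintro rfl; exact key x z (by intro t ht; simp at ht ⊢; tauto)
  have hxz : x ≠ z := by
    rintro rfl; exact key x y (by intro t ht; simp at ht ⊢; tauto)
  have hyz : y ≠ z := by
    rintro rfl; exact key x y (by intro t ht; simp at ht ⊢; tauto)
  -- vertices of H are distinct from x, y, z
  have hHne : ∀ a ∈ H, a ≠ x ∧ a ≠ y ∧ a ≠ z := by
    intro a ha
    have := Finset.disjoint_left.mp hHdisj ha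
    simp only [Finset.mem_insert, Finset.mem_singleton] at this
    push_neg at this
    exact this
  -- every vertex of H has a neighbour in H
  have hnbr : ∀ w ∈ H, ∃ w' ∈ H, G.Adj w w' := by
    intro w hw
    obtain ⟨v, hv, hvw⟩ := Finset.exists_mem_ne (show 1 < H.card by omega) w
    have hwS : w ∈ (↑H : Set V) := by simpa using hw
    have hvS : v ∈ (↑H : Set V) := by simpa using hv
    obtain ⟨p⟩ := hHconn.preconnected ⟨w, hwS⟩ ⟨v, hvS⟩
    have hne : (⟨w, hwS⟩ : (↑H : Set V)) ≠ ⟨v, hvS⟩ := by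
      intro h
      exact hvw (congrArg Subtype.val h).symm
    have hnil : ¬ p.Nil := SimpleGraph.Walk.not_nil_of_ne hne
    have hadj := SimpleGraph.Walk.adj_snd hnil
    exact ⟨((p.getVert 1) : V), by simp, hadj⟩
  -- blue neighbourhoods
  set Nx : Finset V := H.filter (fun b => s(x, b) ∈ B) with hNxdef
  set Ny : Finset V := H.filter (fun b => s(y, b) ∈ B) with hNydef
  set Nz : Finset V := H.filter (fun b => s(z, b) ∈ B) with hNzdef
  have memNx : ∀ {b : V}, b ∈ Nx ↔ b ∈ H ∧ s(x, b) ∈ B := by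
    intro b; simp [hNxdef]
  have memNy : ∀ {b : V}, b ∈ Ny ↔ b ∈ H ∧ s(y, b) ∈ B := by
    intro b; simp [hNydef]
  have memNz : ∀ {b : V}, b ∈ Nz ↔ b ∈ H ∧ s(z, b) ∈ B := by
    intro b; simp [hNzdef]
  -- count bound
  have hcard_le : ((({x, y, z} : Finset V) ×ˢ H).filter
      (fun p : V × V => G.Adj p.1 p.2 ∧ s(p.1, p.2) ∈ B)).card
      ≤ Nx.card + Ny.card + Nz.card := by
    have hsub : (({x, y, z} : Finset V) ×ˢ H).filter
        (fun p : V × V => G.Adj p.1 p.2 ∧ s(p.1, p.2) ∈ B)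
        ⊆ (Nx.image (Prod.mk x)) ∪ (Ny.image (Prod.mk y)) ∪ (Nz.image (Prod.mk z)) := by
      rintro ⟨a, b⟩ hp
      simp only [Finset.mem_filter, Finset.mem_product, Finset.mem_insert,
        Finset.mem_singleton] at hp
      obtain ⟨⟨h1, h2⟩, _, hB⟩ := hp
      simp only [Finset.mem_union, Finset.mem_image]
      rcases h1 with rfl | rfl | rfl
      · exact Or.inl (Or.inl ⟨b, memNx.mpr ⟨h2, hB⟩, rfl⟩)
      · exact Or.inl (Or.inr ⟨b, memNy.mpr ⟨h2, hB⟩, rfl⟩)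
      · exact Or.inr ⟨b, memNz.mpr ⟨h2, hB⟩, rfl⟩
    refine (Finset.card_le_card hsub).trans ?_
    have u1 := Finset.card_union_le ((Nx.image (Prod.mk x)) ∪ (Ny.image (Prod.mk y)))
      (Nz.image (Prod.mk z))
    have u2 := Finset.card_union_le (Nx.image (Prod.mk x)) (Ny.image (Prod.mk y))
    have i1 := Finset.card_image_le (s := Nx) (f := Prod.mk x)
    have i2 := Finset.card_image_le (s := Ny) (f := Prod.mk y)
    have i3 := Finset.card_image_le (s := Nz) (f := Prod.mk z)
    omega
  -- disjointness of Nx and Ny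
  have hdisj : Disjoint Nx Ny := by
    rw [Finset.disjoint_left]
    intro u hux huy
    exact absurd (noMixed x y u hRxy (memNy.mp huy).2 (memNx.mp hux).2) (by simp)
  have hunion_card : Nx.card + Ny.card = (Nx ∪ Ny).card :=
    (Finset.card_union_of_disjoint hdisj).symm
  -- independence of Nz
  have hIndNz : ∀ a ∈ Nz, ∀ b ∈ Nz, ¬ G.Adj a b := by
    intro a ha b hb hab
    obtain ⟨haH, haB⟩ := memNz.mp ha
    obtain ⟨hbH, hbB⟩ := memNz.mp hb
    exact noMixed a b z (hHred a haH b hbH hab) (Sym2.eq_swap ▸ hbB) (Sym2.eq_swap ▸ haB)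
  -- no blue-red-blue path x - a - b - y with a b in H
  have h4cyc : ∀ a ∈ H, ∀ b ∈ H, s(x, a) ∈ B → s(y, b) ∈ B → G.Adj a b → False := by
    intro a haH b hbH haB hbB hab
    obtain ⟨hax, hay, haz⟩ := hHne a haH
    obtain ⟨hbx, hby, hbz⟩ := hHne b hbH
    exact hNoAlt ⟨x, y, b, a, hxy, hbx.symm, hax.symm, hby.symm, hay.symm, hab.ne',
      hRxy, Sym2.eq_swap ▸ hbB, hHred b hbH a haH hab.symm, Sym2.eq_swap ▸ haB⟩
  -- independence of Nx ∪ Ny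
  have hIndU : ∀ a ∈ Nx ∪ Ny, ∀ b ∈ Nx ∪ Ny, ¬ G.Adj a b := by
    intro a ha b hb hab
    rw [Finset.mem_union] at ha hb
    rcases ha with ha | ha <;> rcases hb with hb | hb
    · obtain ⟨haH, haB⟩ := memNx.mp ha
      obtain ⟨hbH, hbB⟩ := memNx.mp hb
      exact noMixed a b x (hHred a haH b hbH hab) (Sym2.eq_swap ▸ hbB) (Sym2.eq_swap ▸ haB)
    · exact h4cyc a (memNx.mp ha).1 b (memNy.mp hb).1 (memNx.mp ha).2 (memNy.mp hb).2 hab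
    · exact h4cyc b (memNx.mp hb).1 a (memNy.mp ha).1 (memNx.mp hb).2 (memNy.mp ha).2 hab.symm
    · obtain ⟨haH, haB⟩ := memNy.mp ha
      obtain ⟨hbH, hbB⟩ := memNy.mp hb
      exact noMixed a b y (hHred a haH b hbH hab) (Sym2.eq_swap ▸ hbB) (Sym2.eq_swap ▸ haB)
  -- it suffices to bound |Nx| + |Ny| + |Nz|
  suffices h : ∃ A : Finset V, A ⊆ H ∧ (∀ a ∈ A, ∀ b ∈ A, ¬ G.Adj a b) ∧
      Nx.card + Ny.card + Nz.card ≤ A.card + 1 by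
    obtain ⟨A, h1, h2, h3⟩ := h
    exact ⟨A, h1, h2, hcard_le.trans h3⟩
  by_cases hNz : Nz = ∅
  · refine ⟨Nx ∪ Ny, ?_, hIndU, ?_⟩
    · intro a ha
      rw [Finset.mem_union] at ha
      rcases ha with ha | ha
      · exact (memNx.mp ha).1
      · exact (memNy.mp ha).1
    · rw [hNz]; simp; omega
  by_cases hNxy : Nx ∪ Ny = ∅
  · refine ⟨Nz, fun a ha => (memNz.mp ha).1, hIndNz, ?_⟩
    have : (Nx ∪ Ny).card = 0 := by rw [hNxy]; simp
    omega
  -- both nonempty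
  obtain ⟨w0, hw0⟩ := Finset.nonempty_of_ne_empty hNz
  obtain ⟨u0, hu0⟩ := Finset.nonempty_of_ne_empty hNxy
  have hUblue : ∀ u ∈ Nx ∪ Ny, s(x, u) ∈ B ∨ s(y, u) ∈ B := by
    intro u hu
    rw [Finset.mem_union] at hu
    rcases hu with hu | hu
    · exact Or.inl (memNx.mp hu).2
    · exact Or.inr (memNy.mp hu).2
  have hUH : ∀ u ∈ Nx ∪ Ny, u ∈ H := by
    intro u hu
    rw [Finset.mem_union] at hu
    rcases hu with hu | hu
    · exact (memNx.mp hu).1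
    · exact (memNy.mp hu).1
  by_cases hint : ∃ t, t ∈ Nz ∧ t ∈ Nx ∪ Ny
  · -- intersection nonempty: both sets are the singleton {t}
    obtain ⟨t, htz, htxy⟩ := hint
    have htH : t ∈ H := (memNz.mp htz).1
    have hNzsub : Nz ⊆ {t} := by
      intro w2 hw2
      rw [Finset.mem_singleton]
      by_contra hne
      obtain ⟨w2', hw2'H, hadj⟩ := hnbr w2 (memNz.mp hw2).1
      have htw2' : t ≠ w2' := by
        rintro rfl
        exact hIndNz w2 hw2 t htz hadj
      exact hMax ⟨w2, w2', t, (memNz.mp hw2).1, hw2'H, htH,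
        fun h => hne h.symm, htw2', hadj.ne,
        (memNz.mp hw2).2, hHred _ (memNz.mp hw2).1 _ hw2'H hadj, hUblue t htxy⟩
    have hUsub : Nx ∪ Ny ⊆ {t} := by
      intro u2 hu2
      rw [Finset.mem_singleton]
      by_contra hne
      obtain ⟨w', hw'H, hadj⟩ := hnbr t htH
      have hu2w' : u2 ≠ w' := by
        rintro rfl
        exact hIndU t htxy u2 hu2 hadj
      exact hMax ⟨t, w', u2, htH, hw'H, hUH u2 hu2, hne, hu2w', hadj.ne,
        (memNz.mp htz).2, hHred _ htH _ hw'H hadj, hUblue u2 hu2⟩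
    refine ⟨{t}, by simpa using htH, ?_, ?_⟩
    · intro a ha b hb hab
      rw [Finset.mem_singleton] at ha hb
      subst ha; subst hb
      exact G.irrefl hab
    · have c1 : (Nx ∪ Ny).card ≤ 1 := by
        simpa using Finset.card_le_card hUsub
      have c2 : Nz.card ≤ 1 := by
        simpa using Finset.card_le_card hNzsub
      simp only [Finset.card_singleton]
      omega
  · -- disjoint case: Nx ∪ Ny is a singleton {w'} for a red neighbour w' of w0
    push_neg at hint
    obtain ⟨w', hw'H, hadj⟩ := hnbr w0 (memNz.mp hw0).1
    have hUsub : Nx ∪ Ny ⊆ {w'} := by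
      intro u2 hu2
      rw [Finset.mem_singleton]
      by_contra hne
      have hu2w0 : u2 ≠ w0 := by
        rintro rfl
        exact hint u2 hw0 hu2
      exact hMax ⟨w0, w', u2, (memNz.mp hw0).1, hw'H, hUH u2 hu2, hu2w0, hne, hadj.ne,
        (memNz.mp hw0).2, hHred _ (memNz.mp hw0).1 _ hw'H hadj, hUblue u2 hu2⟩
    refine ⟨Nz, fun a ha => (memNz.mp ha).1, hIndNz, ?_⟩
    have c1 : (Nx ∪ Ny).card ≤ 1 := by
      simpa using Finset.card_le_card hUsub
    omega
end
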